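/- arXiv:hep-th/0104052 — 3 statements merged into one kernel-verified Lean document; each statement's English description precedes it below -/
import Mathlib

section
/- The map (m,n) ↦ (k₂, k₃) given by k₂ = (2/3)(m² + mn + n² + 3m + 3n) and k₃ = (1/9)(m−n)(3+2m+n)(3+m+2n) is injective on pairs of nonnegative integers (m,n); i.e., the Casimir eigenvalues uniquely determine the highest weight of an irreducible su(3) representation. -/
/-- Quadratic Casimir eigenvalue of the su(3) irrep with highest weight `(m,n)`. -/
noncomputable def k2 (m n : ℕ) : ℝ :=
  (2 / 3) * ((m : ℝ) ^ 2 + (m : ℝ) * n + (n : ℝ) ^ 2 + 3 * m + 3 * n)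

/-- Cubic Casimir eigenvalue of the su(3) irrep with highest weight `(m,n)`. -/
noncomputable def k3 (m n : ℕ) : ℝ :=
  (1 / 9) * ((m : ℝ) - n) * (3 + 2 * m + n) * (3 + m + 2 * n)

/-- Strict monotonicity of `t ↦ (4A−3t)(3t−A)²` for `t > A`, `t > 0`, over ℤ. -/
lemma casimir_aux (A t t' : ℤ) (h1 : A + 1 ≤ t) (h2 : A + 1 ≤ t') (ht : 0 < t) (ht' : 0 < t')
    (hf : (4*A - 3*t) * (3*t - A)^2 = (4*A - 3*t') * (3*t' - A)^2) : t = t' := by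
  have key : (t - t') * (27 * ((t - A) * (t' - A) + t * (t - A) + t' * (t' - A))) = 0 := by
    linear_combination -hf
  have hpos : 0 < (t - A) * (t' - A) + t * (t - A) + t' * (t' - A) := by
    have h3 : 0 < (t - A) * (t' - A) := mul_pos (by omega) (by omega)
    have h4 : 0 < t * (t - A) := mul_pos ht (by omega)
    have h5 : 0 < t' * (t' - A) := mul_pos ht' (by omega)
    omega
  rcases mul_eq_zero.mp key with h | h
  · omega
  · omega

/-- The Casimir eigenvalues `(k₂, k₃)` uniquely determine the highest weight `(m,n)`
of an irreducible su(3) representation. -/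
theorem casimir_eigenvalues_injective (m n m' n' : ℕ)
    (h2 : k2 m n = k2 m' n') (h3 : k3 m n = k3 m' n') : m = m' ∧ n = n' := by
  have hA : (m:ℤ)^2 + (m:ℤ)*(n:ℤ) + (n:ℤ)^2 + 3*(m:ℤ) + 3*(n:ℤ)
      = (m':ℤ)^2 + (m':ℤ)*(n':ℤ) + (n':ℤ)^2 + 3*(m':ℤ) + 3*(n':ℤ) := by
    have hR : (m:ℝ)^2 + (m:ℝ)*n + (n:ℝ)^2 + 3*m + 3*n
        = (m':ℝ)^2 + (m':ℝ)*n' + (n':ℝ)^2 + 3*m' + 3*n' := by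
      unfold k2 at h2; linarith
    exact_mod_cast hR
  have hB : ((m:ℤ) - n) * (3 + 2*(m:ℤ) + n) * (3 + (m:ℤ) + 2*n)
      = ((m':ℤ) - n') * (3 + 2*(m':ℤ) + n') * (3 + (m':ℤ) + 2*n') := by
    have hR : ((m:ℝ) - n) * (3 + 2*m + n) * (3 + m + 2*n)
        = ((m':ℝ) - n') * (3 + 2*m' + n') * (3 + m' + 2*n') := by
      unfold k3 at h3; linarith
    exact_mod_cast hR
  set a : ℤ := (m : ℤ) with hadef
  set b : ℤ := (n : ℤ) with hbdef
  set c : ℤ := (m' : ℤ) with hcdef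
  set d : ℤ := (n' : ℤ) with hddef
  have ha : 0 ≤ a := Int.natCast_nonneg m
  have hb : 0 ≤ b := Int.natCast_nonneg n
  have hc : 0 ≤ c := Int.natCast_nonneg m'
  have hd : 0 ≤ d := Int.natCast_nonneg n'
  set s : ℤ := a + b + 2 with hs
  set s' : ℤ := c + d + 2 with hs'
  set e : ℤ := (a + 1) * (b + 1) with he
  set e' : ℤ := (c + 1) * (d + 1) with he'
  set A0 : ℤ := s^2 - e with hA0
  have he1 : 1 ≤ e := by
    have := mul_pos (show (0:ℤ) < a + 1 by omega) (show (0:ℤ) < b + 1 by omega)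
    omega
  have he1' : 1 ≤ e' := by
    have := mul_pos (show (0:ℤ) < c + 1 by omega) (show (0:ℤ) < d + 1 by omega)
    omega
  have hA' : s^2 - e = s'^2 - e' := by
    rw [hs, hs', he, he']; linear_combination hA
  -- squared cubic-Casimir equation in the `f` form
  have hB2 : ((a - b) * (3 + 2*a + b) * (3 + a + 2*b))^2
      = ((c - d) * (3 + 2*c + d) * (3 + c + 2*d))^2 := by rw [hB]
  have hBsq : (4*A0 - 3*s^2) * (3*s^2 - A0)^2 = (4*A0 - 3*s'^2) * (3*s'^2 - A0)^2 := by
    have h1 : 4*A0 - 3*s^2 = (a - b)^2 := by rw [hA0, hs, he]; ring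
    have h2 : 3*s^2 - A0 = (3 + 2*a + b) * (3 + a + 2*b) := by rw [hA0, hs, he]; ring
    have h1' : 4*A0 - 3*s'^2 = (c - d)^2 := by rw [hA0, hA', hs', he']; ring
    have h2' : 3*s'^2 - A0 = (3 + 2*c + d) * (3 + c + 2*d) := by
      rw [hA0, hA', hs', he']; ring
    rw [h1, h2, h1', h2']
    linear_combination hB2
  have hsq : 0 < s^2 := by positivity
  have hsq' : 0 < s'^2 := by positivity
  have hts : A0 + 1 ≤ s^2 := by rw [hA0]; linarith
  have hts' : A0 + 1 ≤ s'^2 := by rw [hA0, hA']; linarith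
  have hteq : s^2 = s'^2 := casimir_aux A0 (s^2) (s'^2) hts hts' hsq hsq' hBsq
  have hseq : s = s' := by
    have hz : (s - s') * (s + s') = 0 := by linear_combination hteq
    rcases mul_eq_zero.mp hz with h | h <;> omega
  have heeq : e = e' := by rw [hseq] at hA'; linarith
  have hPpos : 0 < 3*s^2 - A0 := by rw [hA0]; linarith
  have hdiff : a - b = c - d := by
    have hh : (a - b) * (3*s^2 - A0) = (c - d) * (3*s^2 - A0) := by
      have hfac : 3*s^2 - A0 = (3 + 2*a + b) * (3 + a + 2*b) := by rw [hA0, hs, he]; ring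
      have hfac' : 3*s^2 - A0 = (3 + 2*c + d) * (3 + c + 2*d) := by
        rw [hseq, hA0, hA', hs', he']; ring
      conv_lhs => rw [hfac]
      conv_rhs => rw [hfac']
      linear_combination hB
    exact mul_right_cancel₀ (ne_of_gt hPpos) hh
  constructor <;> omega
end

section
/- Let M(k₂,k₃) = √((2/3)(k₂+2)) · ( cos(θ/3 + 2π/3) + 2cos(θ/3) ) − 1 and N(k₂,k₃) = −√((2/3)(k₂+2)) · ( 2cos(θ/3 + 2π/3) + cos(θ/3) ) − 1, where θ = arccos(√6 · k₃ / √((k₂+2)³)). Then for all nonnegative integers m,n, M(k₂(m,n), k₃(m,n)) = m and N(k₂(m,n), k₃(m,n)) = n. -/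
open Real

/-- The angle `θ = arccos(√6 k₃ / √((k₂+2)³))`. -/
noncomputable def theta (x y : ℝ) : ℝ := arccos (Real.sqrt 6 * y / Real.sqrt ((x + 2) ^ 3))

/-- The inversion formula `M(k₂,k₃)` for the first highest-weight label. -/
noncomputable def Mfun (x y : ℝ) : ℝ :=
  Real.sqrt ((2 / 3) * (x + 2)) *
    (cos (theta x y / 3 + 2 * π / 3) + 2 * cos (theta x y / 3)) - 1

/-- The inversion formula `N(k₂,k₃)` for the second highest-weight label. -/
noncomputable def Nfun (x y : ℝ) : ℝ :=
  - Real.sqrt ((2 / 3) * (x + 2)) *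
    (2 * cos (theta x y / 3 + 2 * π / 3) + cos (theta x y / 3)) - 1

lemma casimir_key (a b : ℝ) (ha1 : 1 ≤ a) (hb1 : 1 ≤ b) (x y : ℝ)
    (hx : x + 2 = (2/3) * (a ^ 2 + a * b + b ^ 2))
    (hy : y = (1/9) * (a - b) * (2*a + b) * (a + 2*b)) :
    Mfun x y = a - 1 ∧ Nfun x y = b - 1 := by
  have hQpos : (0:ℝ) < a ^ 2 + a * b + b ^ 2 := by nlinarith
  set qs : ℝ := Real.sqrt (a ^ 2 + a * b + b ^ 2) with hqsdef
  have hqs : qs ^ 2 = a ^ 2 + a * b + b ^ 2 := Real.sq_sqrt hQpos.le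
  have hqspos : 0 < qs := Real.sqrt_pos.mpr hQpos
  have hqsne : qs ≠ 0 := hqspos.ne'
  -- the sqrt prefactor
  have h1 : Real.sqrt ((2/3) * (x + 2)) = (2/3) * qs := by
    rw [hx, show (2/3 : ℝ) * ((2/3) * (a ^ 2 + a * b + b ^ 2)) = ((2/3) * qs)^2 by
      rw [← hqs]; ring]
    exact Real.sqrt_sq (by positivity)
  have h2 : Real.sqrt ((x + 2)^3) = Real.sqrt (2/3) * ((2/3) * qs^3) := by
    rw [hx, show ((2/3 : ℝ) * (a ^ 2 + a * b + b ^ 2))^3 = (2/3) * ((2/3) * qs^3)^2 by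
      rw [← hqs]; ring]
    rw [Real.sqrt_mul (by norm_num), Real.sqrt_sq (by positivity)]
  have h6 : Real.sqrt 6 = 3 * Real.sqrt (2/3) := by
    rw [show (6:ℝ) = 3^2 * (2/3) by norm_num, Real.sqrt_mul (by positivity),
      Real.sqrt_sq (by norm_num)]
  set c0 : ℝ := (2*a + b) / (2*qs) with hc0def
  have hs23 : (0:ℝ) < Real.sqrt (2/3) := Real.sqrt_pos.mpr (by norm_num)
  have hcube : 4 * c0^3 - 3 * c0 = ((2*a+b)^3 - 3*(2*a+b)*qs^2) / (2*qs^3) := by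
    rw [hc0def]; field_simp; ring
  have hfact : (2*a+b)^3 - 3*(2*a+b)*qs^2 = (a-b)*(2*a+b)*(a+2*b) := by
    rw [hqs]; ring
  have harg : Real.sqrt 6 * y / Real.sqrt ((x + 2)^3) = 4 * c0^3 - 3 * c0 := by
    rw [h6, h2, hy, hcube, hfact, div_eq_div_iff (by positivity) (by positivity)]
    ring
  -- bounds for c0
  have hc0_le : c0 ≤ 1 := by
    rw [hc0def, div_le_one (by positivity)]
    nlinarith [sq_nonneg (2*a + b - 2*qs), hqs]
  have hc0_ge : 1/2 ≤ c0 := by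
    rw [hc0def, le_div_iff₀ (by positivity)]
    nlinarith [sq_nonneg (qs - (2*a + b)), hqs]
  have hc0_ge' : -1 ≤ c0 := by linarith
  set φ : ℝ := Real.arccos c0 with hφdef
  have hcosφ : Real.cos φ = c0 := Real.cos_arccos hc0_ge' hc0_le
  have hφ0 : 0 ≤ φ := Real.arccos_nonneg c0
  have hφle : φ ≤ π / 3 := by
    by_contra h
    push_neg at h
    have hlt := Real.cos_lt_cos_of_nonneg_of_le_pi (by positivity) (Real.arccos_le_pi c0) h
    rw [hcosφ, Real.cos_pi_div_three] at hlt
    linarith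
  have htheta : theta x y = 3 * φ := by
    unfold theta
    rw [harg, show (4:ℝ) * c0 ^3 - 3 * c0 = Real.cos (3 * φ) by
      rw [Real.cos_three_mul, hcosφ]]
    exact Real.arccos_cos (by linarith) (by linarith [Real.pi_pos])
  have hθ3 : theta x y / 3 = φ := by rw [htheta]; ring
  have hQne : a ^ 2 + a * b + b ^ 2 ≠ 0 := hQpos.ne'
  have hsinφ : Real.sin φ = Real.sqrt 3 * b / (2 * qs) := by
    rw [hφdef, Real.sin_arccos]
    have e1 : (Real.sqrt 3 * b / (2*qs))^2 = 3*b^2/(4*qs^2) := by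
      rw [div_pow, mul_pow, Real.sq_sqrt (by norm_num : (0:ℝ) ≤ 3)]
      ring
    have e2 : 1 - c0^2 = 3*b^2/(4*qs^2) := by
      have h' : c0^2 = (2*a+b)^2/(4*qs^2) := by rw [hc0def]; ring
      rw [h', hqs]
      field_simp
      ring
    rw [e2, ← e1]
    exact Real.sqrt_sq (by positivity)
  have h3 : Real.sqrt 3 * Real.sqrt 3 = 3 := Real.mul_self_sqrt (by norm_num)
  have hcosB : Real.cos (theta x y / 3 + 2 * π / 3) = -(a + 2*b) / (2 * qs) := by
    have hcos23 : Real.cos (2 * π / 3) = -(1/2) := by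
      rw [show (2 * π / 3 : ℝ) = π - π/3 by ring, Real.cos_pi_sub, Real.cos_pi_div_three]
    have hsin23 : Real.sin (2 * π / 3) = Real.sqrt 3 / 2 := by
      rw [show (2 * π / 3 : ℝ) = π - π/3 by ring, Real.sin_pi_sub, Real.sin_pi_div_three]
    rw [hθ3, Real.cos_add, hcos23, hsin23, hcosφ, hsinφ, hc0def]
    rw [show Real.sqrt 3 * b / (2*qs) * (Real.sqrt 3 / 2)
        = (Real.sqrt 3 * Real.sqrt 3) * (b / (4*qs)) by ring, h3]
    field_simp
    ring
  have hcosA : Real.cos (theta x y / 3) = (2*a + b) / (2 * qs) := by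
    rw [hθ3, hcosφ, hc0def]
  constructor
  · unfold Mfun
    rw [h1, hcosB, hcosA]
    field_simp
    ring
  · unfold Nfun
    rw [h1, hcosB, hcosA]
    field_simp
    ring

/-- The formulas `M` and `N` invert the Casimir eigenvalue functions: for all
nonnegative integers `m, n`, `M(k₂(m,n), k₃(m,n)) = m` and `N(k₂(m,n), k₃(m,n)) = n`. -/
theorem casimir_inversion (m n : ℕ) :
    Mfun (k2 m n) (k3 m n) = m ∧ Nfun (k2 m n) (k3 m n) = n := by
  have hm : (1:ℝ) ≤ (m:ℝ) + 1 := by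
    have : (0:ℝ) ≤ (m:ℝ) := Nat.cast_nonneg m
    linarith
  have hn : (1:ℝ) ≤ (n:ℝ) + 1 := by
    have : (0:ℝ) ≤ (n:ℝ) := Nat.cast_nonneg n
    linarith
  have key := casimir_key ((m:ℝ)+1) ((n:ℝ)+1) hm hn (k2 m n) (k3 m n)
    (by simp only [k2]; ring) (by simp only [k3]; ring)
  constructor
  · rw [key.1]; ring
  · rw [key.2]; ring
end

section
/- For nonnegative integers m, n, the quantity √6·k₃(m,n)/√((k₂(m,n)+2)³) lies in the interval [−1, 1], so the arccos in the inversion formulas for (M, N) is well-defined. -/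
lemma key_ineq (m n : ℕ) : 6 * (k3 m n) ^ 2 ≤ (k2 m n + 2) ^ 3 := by
  unfold k2 k3
  nlinarith [sq_nonneg (((m : ℝ) + 1) * ((n : ℝ) + 1) * ((m : ℝ) + (n : ℝ) + 2)),
    sq_nonneg ((m : ℝ) - n), Nat.cast_nonneg (α := ℝ) m, Nat.cast_nonneg (α := ℝ) n]

/-- The argument `√6 k₃ / √((k₂+2)³)` of the arccos in the inversion formulas
for `(M, N)` lies in `[−1, 1]`, so the arccos is well-defined. -/
theorem arccos_argument_mem_Icc (m n : ℕ) :
    Real.sqrt 6 * k3 m n / Real.sqrt ((k2 m n + 2) ^ 3) ∈ Set.Icc (-1 : ℝ) 1 := by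
  have hA : (0:ℝ) < k2 m n + 2 := by
    unfold k2; positivity
  have hd : 0 < Real.sqrt ((k2 m n + 2) ^ 3) := Real.sqrt_pos.mpr (by positivity)
  rw [Set.mem_Icc, ← abs_le, abs_div, abs_of_pos hd, div_le_one hd]
  rw [Real.le_sqrt (abs_nonneg _)]
  have h6 : Real.sqrt 6 ^ 2 = 6 := Real.sq_sqrt (by norm_num)
  calc |Real.sqrt 6 * k3 m n| ^ 2 = Real.sqrt 6 ^ 2 * (k3 m n) ^ 2 := by
        rw [← abs_pow]; rw [mul_pow]; rw [abs_of_nonneg (by positivity)]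
    _ = 6 * (k3 m n) ^ 2 := by rw [h6]
    _ ≤ (k2 m n + 2) ^ 3 := key_ineq m n
  exact pow_nonneg hA.le 3
end
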